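/- Let (X, 𝒜) be a t-(v,k,λ) design with b pairwise distinct blocks, fix an integer t ≥ 2, and for each s ∈ {1,…,t−1} let a_s be an integer with 0 ≤ a_s ≤ λ_s^t = λ·C(v−t, k−s)/C(v−t, k−t), not all zero. Let P be the b×v array with rows indexed by the blocks A ∈ 𝒜 and columns indexed by the points x ∈ X, with P_{A,x} = ⋆ if x ∈ A and P_{A,x} = null otherwise, and let B be the array on R×[t]. Then (P, B) is a (K, K', F, F', Z, Z', S) hotplug placement delivery array with K = v, K' = t, F = b, F' = Σ_{s=1}^{t−1} a_s·C(t,s), Z = λ_1 = λ·C(v−1,t−1)/C(k−1,t−1), Z' = Σ_{s=1}^{t−1} a_s·C(t−1,s−1) and S = Σ_{s=1}^{t−1} a_s·C(t,s+1): each column of P contains exactly Z stars; B is a (K', F', Z', S) placement delivery array; and for every τ ⊆ X with |τ| = t there exist a subset ζ ⊆ 𝒜 with |ζ| = F' and bijections from ζ to R and from τ to [t] under which the subarray of P on rows ζ and columns τ has stars in exactly the same positions as B. -/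

import Mathlib

/-!
The number of blocks containing a set `I` and missing a disjoint set `J`, with
`|I| + |J| ≤ t`, is `λ·C(v−|I|−|J|, k−|I|) / C(v−t, k−t)`: for `J = ∅` this is the double
count of `λ_i`, and adding a point to `J` is Pascal's rule. Label a `t`-set `τ` of points
by `[t]`; the row `(Y, i)` of `B` with `|Y| = s` needs a block whose trace on `τ` is the
preimage of `Y`. There are `λ·C(v−t, k−s)/C(v−t, k−t) ≥ a_s` such blocks, so the rows
`(Y, 1), …, (Y, a_s)` can be given distinct ones, and the star pattern on `τ` then agrees
with `B` by construction. The PDA properties of `B` are counts of subsets of `[t]`: two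
cells carry the same symbol `(Z, i)` only when their rows arise by deleting different points
of the same `(s+1)`-set `Z`.
-/

open Finset

/-- `(X, 𝒜)` is a `t`-`(v, k, λ)` design with pairwise distinct blocks: `X` is a
set of `v` points, `𝒜` is a set of `k`-element subsets of `X` (blocks), with
`v > k ≥ t ≥ 1`, and every `t`-element subset of `X` is contained in exactly
`lam` blocks. -/
def IsDesignF {α : Type*} [DecidableEq α] (t v k lam : ℕ)
    (X : Finset α) (𝒜 : Finset (Finset α)) : Prop :=
  X.card = v ∧ k < v ∧ t ≤ k ∧ 1 ≤ t ∧
  (∀ A ∈ 𝒜, A ⊆ X ∧ A.card = k) ∧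
  ∀ T : Finset α, T ⊆ X → T.card = t →
    (𝒜.filter (fun A => T ⊆ A)).card = lam

/-- The row-index set `R = ⋃_{s=1}^{t−1} { (Y,i) : Y ⊆ [t], |Y| = s, i ∈ [a_s] }`
of the array `B`, where `[n] = {1, …, n}`. -/
def Rset (t : ℕ) (a : ℕ → ℕ) : Finset (Finset ℕ × ℕ) :=
  (Finset.Icc 1 (t - 1)).biUnion fun s =>
    (Finset.powersetCard s (Finset.Icc 1 t)) ×ˢ (Finset.Icc 1 (a s))

/-- The entry of the array `B` at row `(Y,i)` and column `j`:
`none` is the star `⋆` (when `j ∈ Y`), `some (Y ∪ {j}, i)` is the integer entry. -/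
def Bent (p : Finset ℕ × ℕ) (j : ℕ) : Option (Finset ℕ × ℕ) :=
  if j ∈ p.1 then none else some (insert j p.1, p.2)

/-- The set of integer entries of the array `B`. -/
def IntEntries (t : ℕ) (a : ℕ → ℕ) : Finset (Finset ℕ × ℕ) :=
  (((Rset t a) ×ˢ (Finset.Icc 1 t)).filter
      (fun q : (Finset ℕ × ℕ) × ℕ => q.2 ∉ q.1.1)).image
    (fun q : (Finset ℕ × ℕ) × ℕ => (insert q.2 q.1.1, q.1.2))

lemma card_filter_subset_disjoint_eq_add {α : Type*} [DecidableEq α] (𝒜 : Finset (Finset α))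
    (I J : Finset α) (x : α) :
    #{A ∈ 𝒜 | I ⊆ A ∧ Disjoint A J} =
      #{A ∈ 𝒜 | insert x I ⊆ A ∧ Disjoint A J} +
        #{A ∈ 𝒜 | I ⊆ A ∧ Disjoint A (insert x J)} := by
  rw [← card_filter_add_card_filter_not (fun A => x ∈ A), filter_filter, filter_filter]
  congr 2 <;> ext A <;>
    simp only [mem_filter, insert_subset_iff, disjoint_insert_right] <;> tauto

lemma forall_mem_iff_mem_iff_subset_and_disjoint {α : Type*} [DecidableEq α] {τ I A : Finset α}
    (hIτ : I ⊆ τ) : (∀ y ∈ τ, y ∈ A ↔ y ∈ I) ↔ I ⊆ A ∧ Disjoint A (τ \ I) := by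
  simp only [subset_iff, disjoint_left, mem_sdiff]
  grind

lemma exists_mapsTo_injOn_Icc {β : Type*} [Nonempty β] {s : Finset β} {n : ℕ} (h : n ≤ #s) :
    ∃ g : ℕ → β, Set.MapsTo g (Icc 1 n : Finset ℕ) s ∧ Set.InjOn g (Icc 1 n : Finset ℕ) :=
  (Icc 1 n).finite_toSet.exists_injOn_of_encard_le (t := (s : Set β)) <| by
    rw [Set.encard_coe_eq_coe_finsetCard, Set.encard_coe_eq_coe_finsetCard, Nat.card_Icc,
      add_tsub_cancel_right]
    exact_mod_cast h

lemma card_biUnion_product_Icc {ι β : Type*} [DecidableEq β] {S : Finset ι} {U : Finset β}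
    {L : ι → Finset (Finset β)} {f : ι → ℕ} (hf : Set.InjOn f S)
    (hL : ∀ s ∈ S, L s ⊆ U.powersetCard (f s)) (a : ι → ℕ) :
    #(S.biUnion fun s => L s ×ˢ Icc 1 (a s)) = ∑ s ∈ S, a s * #(L s) := by
  rw [card_biUnion]
  · refine sum_congr rfl fun s _ => ?_
    rw [card_product, Nat.card_Icc, add_tsub_cancel_right, mul_comm]
  · intro s hs s' hs' hne
    exact disjoint_product.2 <| Or.inl <|
      (pairwise_disjoint_powersetCard U (hf.ne hs hs' hne)).mono (hL s hs) (hL s' hs')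

namespace IsDesignF

variable {α : Type*} [DecidableEq α] {t v k lam : ℕ} {X : Finset α} {𝒜 : Finset (Finset α)}

theorem card_filter_superset_mul (hdes : IsDesignF t v k lam X 𝒜) {I : Finset α}
    (hIX : I ⊆ X) (hIt : #I ≤ t) :
    #{A ∈ 𝒜 | I ⊆ A} * (k - #I).choose (t - #I) = lam * (v - #I).choose (t - #I) := by
  obtain ⟨hX, -, -, -, hblocks, hlam⟩ := hdes
  rw [card_mul_eq_card_mul (fun A T => T ⊆ A) (t := {T ∈ X.powersetCard t | I ⊆ T})
    (n := lam), card_filter_powersetCard_subset _ _ _ hIX hIt, hX, mul_comm]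
  · intro A hA
    obtain ⟨hA, hIA⟩ := mem_filter.1 hA
    obtain ⟨hAX, hAk⟩ := hblocks A hA
    rw [← hAk, ← card_filter_powersetCard_subset I A t hIA hIt, bipartiteAbove, filter_filter]
    congr 1
    ext T
    simp only [mem_filter, mem_powersetCard]
    exact ⟨fun ⟨⟨_, hT⟩, hIT, hTA⟩ => ⟨⟨hTA, hT⟩, hIT⟩,
      fun ⟨⟨hTA, hT⟩, hIT⟩ => ⟨⟨hTA.trans hAX, hT⟩, hIT, hTA⟩⟩
  · intro T hT
    obtain ⟨hT, hIT⟩ := mem_filter.1 hT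
    obtain ⟨hTX, hTt⟩ := mem_powersetCard.1 hT
    rw [bipartiteBelow, filter_filter, ← hlam T hTX hTt]
    congr 1
    ext A
    simp only [mem_filter]
    exact and_congr_right fun _ => and_iff_right_of_imp fun hTA => hIT.trans hTA

theorem card_filter_subset_disjoint_mul (hdes : IsDesignF t v k lam X 𝒜) (J : Finset α) :
    ∀ I ⊆ X, J ⊆ X → Disjoint I J → #I + #J ≤ t →
      #{A ∈ 𝒜 | I ⊆ A ∧ Disjoint A J} * (v - t).choose (k - t) =
        lam * (v - #I - #J).choose (k - #I) := by
  obtain ⟨hX, hkv, htk, -⟩ := id hdes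
  induction J using Finset.induction_on with
  | empty =>
    intro I hIX _ _ hIt
    simp only [disjoint_empty_right, and_true, card_empty, Nat.sub_zero]
    have hlamI := hdes.card_filter_superset_mul hIX (by omega)
    have hpos : 0 < (k - #I).choose (t - #I) := Nat.choose_pos (by omega)
    have hchoose := Nat.choose_mul (n := v - #I) (k := k - #I) (s := t - #I) (by omega)
    rw [show v - #I - (t - #I) = v - t by omega, show k - #I - (t - #I) = k - t by omega]
      at hchoose
    refine Nat.eq_of_mul_eq_mul_right hpos ?_
    rw [mul_right_comm, hlamI, mul_assoc, mul_assoc, hchoose]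
  | @insert x J hxJ ih =>
    intro I hIX hJX hIJ hIJt
    obtain ⟨hxI, hIJ⟩ := disjoint_insert_right.1 hIJ
    obtain ⟨hxX, hJX⟩ := insert_subset_iff.1 hJX
    rw [card_insert_of_notMem hxJ] at hIJt ⊢
    have hx := ih (insert x I) (insert_subset hxX hIX) hJX
      (disjoint_insert_left.2 ⟨hxJ, hIJ⟩) (by rw [card_insert_of_notMem hxI]; omega)
    rw [card_insert_of_notMem hxI] at hx
    have hpascal : (v - #I - #J).choose (k - #I) =
        (v - (#I + 1) - #J).choose (k - (#I + 1)) + (v - #I - (#J + 1)).choose (k - #I) := by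
      have := card_le_card hJX
      rw [show v - #I - #J = (v - #I - (#J + 1)) + 1 by omega,
        show k - #I = (k - (#I + 1)) + 1 by omega, Nat.choose_succ_succ]
      congr 2; omega
    have := ih I hIX hJX hIJ (by omega)
    rw [card_filter_subset_disjoint_eq_add 𝒜 I J x, add_mul, hx, hpascal, mul_add] at this
    omega

theorem card_filter_mem (hdes : IsDesignF t v k lam X 𝒜) {y : α} (hy : y ∈ X) :
    #{A ∈ 𝒜 | y ∈ A} = lam * (v - 1).choose (t - 1) / (k - 1).choose (t - 1) := by
  obtain ⟨-, -, htk, ht1, -⟩ := id hdes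
  have h := hdes.card_filter_superset_mul (singleton_subset_iff.2 hy) (by simpa using ht1)
  simp only [singleton_subset_iff, card_singleton] at h
  rw [← h, Nat.mul_div_cancel _ (Nat.choose_pos (by omega))]

theorem card_filter_trace_eq (hdes : IsDesignF t v k lam X 𝒜) {τ I : Finset α}
    (hτX : τ ⊆ X) (hτ : #τ = t) (hIτ : I ⊆ τ) :
    #{A ∈ 𝒜 | ∀ y ∈ τ, y ∈ A ↔ y ∈ I} =
      lam * (v - t).choose (k - #I) / (v - t).choose (k - t) := by
  obtain ⟨-, hkv, htk, -⟩ := id hdes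
  have hJ : #(τ \ I) = t - #I := by rw [card_sdiff_of_subset hIτ, hτ]
  have h := hdes.card_filter_subset_disjoint_mul (τ \ I) I (hIτ.trans hτX)
    (sdiff_subset.trans hτX) disjoint_sdiff (by have := card_le_card hIτ; omega)
  rw [hJ, show v - #I - (t - #I) = v - t by have := card_le_card hIτ; omega] at h
  rw [← h, Nat.mul_div_cancel _ (Nat.choose_pos (by omega))]
  congr 1
  exact filter_congr fun A _ => forall_mem_iff_mem_iff_subset_and_disjoint hIτ

theorem card_filter_trace_preimage (hdes : IsDesignF t v k lam X 𝒜) {τ : Finset α}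
    (hτX : τ ⊆ X) (hτ : #τ = t) {σ : α → ℕ} (hσ : Set.BijOn σ τ (Icc 1 t))
    {Y : Finset ℕ} (hY : Y ⊆ Icc 1 t) :
    #{A ∈ 𝒜 | ∀ y ∈ τ, y ∈ A ↔ σ y ∈ Y} =
      lam * (v - t).choose (k - #Y) / (v - t).choose (k - t) := by
  have hI : #{y ∈ τ | σ y ∈ Y} = #Y := by
    refine card_nbij σ (fun y hy => (mem_filter.1 hy).2) (hσ.injOn.mono (filter_subset _ _)) ?_
    intro j hj
    obtain ⟨y, hy, rfl⟩ := hσ.surjOn (hY hj)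
    exact ⟨y, mem_filter.2 ⟨hy, hj⟩, rfl⟩
  rw [← hI, ← hdes.card_filter_trace_eq hτX hτ (filter_subset _ _)]
  congr 1
  exact filter_congr fun A _ => forall₂_congr fun y hy => by rw [mem_filter, and_iff_right hy]

end IsDesignF

lemma mem_Rset {t : ℕ} {a : ℕ → ℕ} {p : Finset ℕ × ℕ} :
    p ∈ Rset t a ↔ p.1 ⊆ Icc 1 t ∧ #p.1 ∈ Icc 1 (t - 1) ∧ p.2 ∈ Icc 1 (a #p.1) := by
  simp only [Rset, mem_biUnion, mem_product, mem_powersetCard]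
  constructor
  · rintro ⟨s, hs, ⟨hY, rfl⟩, hi⟩
    exact ⟨hY, hs, hi⟩
  · rintro ⟨hY, hs, hi⟩
    exact ⟨_, hs, ⟨hY, rfl⟩, hi⟩

theorem card_Rset (t : ℕ) (a : ℕ → ℕ) :
    #(Rset t a) = ∑ s ∈ Icc 1 (t - 1), a s * t.choose s := by
  rw [Rset, card_biUnion_product_Icc (L := fun s => (Icc 1 t).powersetCard s) (Set.injOn_id _)
    (fun s _ => subset_rfl)]
  simp

lemma Bent_eq_none_iff {p : Finset ℕ × ℕ} {j : ℕ} : Bent p j = none ↔ j ∈ p.1 := by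
  unfold Bent
  split_ifs <;> simp_all

lemma Bent_eq_some_iff {p e : Finset ℕ × ℕ} {j : ℕ} :
    Bent p j = some e ↔ j ∉ p.1 ∧ (insert j p.1, p.2) = e := by
  unfold Bent
  split_ifs <;> simp_all

theorem card_filter_Bent_eq_none {t j : ℕ} (a : ℕ → ℕ) (hj : j ∈ Icc 1 t) :
    #{p ∈ Rset t a | Bent p j = none} =
      ∑ s ∈ Icc 1 (t - 1), a s * (t - 1).choose (s - 1) := by
  have hstars : {p ∈ Rset t a | Bent p j = none} = (Icc 1 (t - 1)).biUnion
      fun s => {Y ∈ (Icc 1 t).powersetCard s | {j} ⊆ Y} ×ˢ Icc 1 (a s) := by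
    ext p
    simp only [mem_filter, mem_Rset, Bent_eq_none_iff, mem_biUnion, mem_product,
      mem_powersetCard, singleton_subset_iff]
    grind
  rw [hstars, card_biUnion_product_Icc (L := fun s => {Y ∈ (Icc 1 t).powersetCard s | {j} ⊆ Y})
    (Set.injOn_id _) (fun s _ => filter_subset _ _)]
  refine sum_congr rfl fun s hs => ?_
  rw [card_filter_powersetCard_subset _ _ _ (singleton_subset_iff.2 hj)
    (by simpa using (mem_Icc.1 hs).1)]
  simp

lemma IntEntries_eq_biUnion (t : ℕ) (a : ℕ → ℕ) :
    IntEntries t a = (Icc 1 (t - 1)).biUnion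
      fun s => (Icc 1 t).powersetCard (s + 1) ×ˢ Icc 1 (a s) := by
  ext ⟨Z, i⟩
  simp only [IntEntries, mem_image, mem_filter, mem_product, mem_Rset, mem_biUnion,
    mem_powersetCard, Prod.exists, Prod.mk.injEq]
  constructor
  · rintro ⟨Y, i, j, ⟨⟨⟨hY, hs, hi⟩, hj⟩, hjY⟩, rfl, rfl⟩
    exact ⟨#Y, hs, ⟨insert_subset hj hY, card_insert_of_notMem hjY⟩, hi⟩
  · rintro ⟨s, hs, ⟨hZ, hZs⟩, hi⟩
    obtain ⟨j, Y, hjY, rfl, rfl⟩ := card_eq_succ.1 hZs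
    obtain ⟨hj, hY⟩ := insert_subset_iff.1 hZ
    exact ⟨Y, i, j, ⟨⟨⟨hY, hs, hi⟩, hj⟩, hjY⟩, rfl, rfl⟩

theorem card_IntEntries (t : ℕ) (a : ℕ → ℕ) :
    #(IntEntries t a) = ∑ s ∈ Icc 1 (t - 1), a s * t.choose (s + 1) := by
  rw [IntEntries_eq_biUnion, card_biUnion_product_Icc (add_left_injective 1).injOn
    (fun s _ => subset_rfl)]
  simp

theorem Bent_cross_eq_none {p p' e : Finset ℕ × ℕ} {j j' : ℕ} (hne : (p, j) ≠ (p', j'))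
    (he : Bent p j = some e) (he' : Bent p' j' = some e) :
    p ≠ p' ∧ j ≠ j' ∧ Bent p j' = none ∧ Bent p' j = none := by
  obtain ⟨hjp, rfl⟩ := Bent_eq_some_iff.1 he
  obtain ⟨hj'p', hins, hi⟩ := by simpa only [Prod.mk.injEq] using Bent_eq_some_iff.1 he'
  have hjj' : j ≠ j' := by
    rintro rfl
    refine hne (Prod.ext (Prod.ext ?_ hi.symm) rfl)
    rw [← erase_insert hjp, ← erase_insert hj'p', hins]
  have hj'p : j' ∈ p.1 :=
    (mem_insert.1 (hins ▸ mem_insert_self j' p'.1)).resolve_left hjj'.symm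
  have hjp' : j ∈ p'.1 :=
    (mem_insert.1 (hins.symm ▸ mem_insert_self j p.1)).resolve_left hjj'
  exact ⟨fun h => hjp (h ▸ hjp'), hjj', Bent_eq_none_iff.2 hj'p, Bent_eq_none_iff.2 hjp'⟩

theorem exists_rows_of_le_card_filter {α : Type*} [DecidableEq α] {𝒜 : Finset (Finset α)}
    {τ : Finset α} {t : ℕ} {a : ℕ → ℕ} {σ : α → ℕ} (hσ : Set.BijOn σ τ (Icc 1 t))
    (hcard : ∀ Y ⊆ Icc 1 t, #Y ∈ Icc 1 (t - 1) →
      a #Y ≤ #{A ∈ 𝒜 | ∀ y ∈ τ, y ∈ A ↔ σ y ∈ Y}) :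
    ∃ ζ ⊆ 𝒜, #ζ = #(Rset t a) ∧ ∃ ρ : Finset α → Finset ℕ × ℕ,
      Set.BijOn ρ ζ (Rset t a) ∧ ∀ A ∈ ζ, ∀ y ∈ τ, (y ∈ A ↔ σ y ∈ (ρ A).1) := by
  have hfibre : ∀ Y : Finset ℕ, ∃ g : ℕ → Finset α, Y ⊆ Icc 1 t → #Y ∈ Icc 1 (t - 1) →
      Set.MapsTo g (Icc 1 (a #Y) : Finset ℕ) ({A ∈ 𝒜 | ∀ y ∈ τ, y ∈ A ↔ σ y ∈ Y} : Finset _) ∧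
        Set.InjOn g (Icc 1 (a #Y) : Finset ℕ) := by
    intro Y
    by_cases hY : Y ⊆ Icc 1 t ∧ #Y ∈ Icc 1 (t - 1)
    · obtain ⟨g, hg⟩ := exists_mapsTo_injOn_Icc (hcard Y hY.1 hY.2)
      exact ⟨g, fun _ _ => hg⟩
    · exact ⟨fun _ => ∅, fun h1 h2 => absurd ⟨h1, h2⟩ hY⟩
  choose g hg using hfibre
  set Ψ : Finset ℕ × ℕ → Finset α := fun p => g p.1 p.2
  have hΨ : ∀ p ∈ Rset t a, Ψ p ∈ 𝒜 ∧ ∀ y ∈ τ, y ∈ Ψ p ↔ σ y ∈ p.1 := by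
    intro p hp
    obtain ⟨hY, hs, hi⟩ := mem_Rset.1 hp
    exact mem_filter.1 ((hg p.1 hY hs).1 hi)
  have hrow : ∀ p ∈ Rset t a, p.1 = {y ∈ τ | y ∈ Ψ p}.image σ := by
    intro p hp
    ext j
    simp only [mem_image, mem_filter]
    constructor
    · intro hj
      obtain ⟨y, hy, rfl⟩ := hσ.surjOn ((mem_Rset.1 hp).1 hj)
      exact ⟨y, ⟨hy, ((hΨ p hp).2 y hy).2 hj⟩, rfl⟩
    · rintro ⟨y, ⟨hy, hyΨ⟩, rfl⟩
      exact ((hΨ p hp).2 y hy).1 hyΨ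
  have hΨinj : Set.InjOn Ψ (Rset t a) := by
    intro p hp q hq hpq
    have h1 : p.1 = q.1 := by rw [hrow p hp, hrow q hq, hpq]
    obtain ⟨hY, hs, hi⟩ := mem_Rset.1 hp
    obtain ⟨-, -, hi'⟩ := mem_Rset.1 hq
    rw [← h1] at hi'
    exact Prod.ext h1 ((hg p.1 hY hs).2 hi hi' (by simpa [Ψ, h1] using hpq))
  have hbij := hΨinj.bijOn_image
  refine ⟨(Rset t a).image Ψ, ?_, card_image_of_injOn hΨinj, Function.invFunOn Ψ (Rset t a),
    by simpa using hbij.symm hbij.invOn_invFunOn.symm, ?_⟩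
  · intro A hA
    obtain ⟨p, hp, rfl⟩ := mem_image.1 hA
    exact (hΨ p hp).1
  · intro A hA y hy
    obtain ⟨hρ, hΨρ⟩ := Function.invFunOn_pos (mem_image.1 hA)
    rw [← (hΨ _ hρ).2 y hy, hΨρ]

theorem stmt11_general {α : Type*} [DecidableEq α] (t v k lam : ℕ)
    (X : Finset α) (𝒜 : Finset (Finset α))
    (hdes : IsDesignF t v k lam X 𝒜)
    (a : ℕ → ℕ)
    (ha : ∀ s ∈ Finset.Icc 1 (t - 1),
      a s ≤ lam * Nat.choose (v - t) (k - s) / Nat.choose (v - t) (k - t)) :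
    -- each column of P contains exactly Z = λ₁ stars
    (∀ y ∈ X, (𝒜.filter (fun A => y ∈ A)).card =
        lam * Nat.choose (v - 1) (t - 1) / Nat.choose (k - 1) (t - 1)) ∧
    -- B is a (K', F', Z', S) PDA
    ((Rset t a).card = ∑ s ∈ Finset.Icc 1 (t - 1), a s * Nat.choose t s ∧
      (∀ j ∈ Finset.Icc 1 t,
        ((Rset t a).filter (fun p => Bent p j = none)).card =
          ∑ s ∈ Finset.Icc 1 (t - 1), a s * Nat.choose (t - 1) (s - 1)) ∧
      (IntEntries t a).card =
        ∑ s ∈ Finset.Icc 1 (t - 1), a s * Nat.choose t (s + 1) ∧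
      (∀ p ∈ Rset t a, ∀ p' ∈ Rset t a,
        ∀ j ∈ Finset.Icc 1 t, ∀ j' ∈ Finset.Icc 1 t,
        (p, j) ≠ (p', j') → ∀ e : Finset ℕ × ℕ,
          Bent p j = some e → Bent p' j' = some e →
            p ≠ p' ∧ j ≠ j' ∧ Bent p j' = none ∧ Bent p' j = none)) ∧
    -- hotplug condition: every t-subset τ of columns has matching rows ζ
    (∀ τ : Finset α, τ ⊆ X → τ.card = t →
      ∃ ζ : Finset (Finset α), ζ ⊆ 𝒜 ∧
        ζ.card = ∑ s ∈ Finset.Icc 1 (t - 1), a s * Nat.choose t s ∧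
        ∃ (ρ : Finset α → Finset ℕ × ℕ) (σ : α → ℕ),
          Set.BijOn ρ ↑ζ ↑(Rset t a) ∧
          Set.BijOn σ ↑τ ↑(Finset.Icc 1 t) ∧
          ∀ A ∈ ζ, ∀ y ∈ τ, (y ∈ A ↔ σ y ∈ (ρ A).1)) := by
  refine ⟨fun y hy => hdes.card_filter_mem hy,
    ⟨card_Rset t a, fun j hj => card_filter_Bent_eq_none a hj, card_IntEntries t a,
      fun p _ p' _ j _ j' _ hne e he he' => Bent_cross_eq_none hne he he'⟩, ?_⟩
  intro τ hτX hτ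
  obtain ⟨σ, hσ⟩ := τ.finite_toSet.exists_bijOn_of_encard_eq
    (t := ((Icc 1 t : Finset ℕ) : Set ℕ)) <| by
      rw [Set.encard_coe_eq_coe_finsetCard, Set.encard_coe_eq_coe_finsetCard, hτ, Nat.card_Icc,
        add_tsub_cancel_right]
  have hcard : ∀ Y ⊆ Icc 1 t, #Y ∈ Icc 1 (t - 1) →
      a #Y ≤ #{A ∈ 𝒜 | ∀ y ∈ τ, y ∈ A ↔ σ y ∈ Y} := fun Y hY hs =>
    (hdes.card_filter_trace_preimage hτX hτ hσ hY).symm ▸ ha #Y hs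
  obtain ⟨ζ, hζ, hζcard, ρ, hρ, hstar⟩ := exists_rows_of_le_card_filter hσ hcard
  exact ⟨ζ, hζ, hζcard.trans (card_Rset t a), ρ, σ, hρ, hσ, hstar⟩

/-- `(P, B)` is a `(K,K',F,F',Z,Z',S)` HpPDA with `K = v`, `K' = t`, `F = b`,
`F' = Σ a_s·C(t,s)`, `Z = λ₁`, `Z' = Σ a_s·C(t−1,s−1)`, `S = Σ a_s·C(t,s+1)`,
where `P` is the `b × v` star array of the design (`P_{A,x} = ⋆` iff `x ∈ A`)
and `B` is the array on `R × [t]`. Conjuncts: each column of `P` has exactly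
`Z = λ₁` stars; `B` is a `(t, F', Z', S)` PDA (`|R| = F'`, each column has `Z'`
stars, `S` distinct integer entries, PDA condition C3); and for every `τ ⊆ X`
with `|τ| = t` there are `ζ ⊆ 𝒜` with `|ζ| = F'` and bijections `ρ : ζ → R`,
`σ : τ → [t]` under which the star pattern of `P` on `ζ × τ` coincides with
that of `B`. -/
theorem stmt11 {α : Type*} [DecidableEq α] (t v k lam b : ℕ)
    (X : Finset α) (𝒜 : Finset (Finset α))
    (hdes : IsDesignF t v k lam X 𝒜) (hb : 𝒜.card = b) (ht : 2 ≤ t)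
    (a : ℕ → ℕ)
    (ha : ∀ s ∈ Finset.Icc 1 (t - 1),
      a s ≤ lam * Nat.choose (v - t) (k - s) / Nat.choose (v - t) (k - t))
    (hnz : ∃ s ∈ Finset.Icc 1 (t - 1), a s ≠ 0) :
    -- each column of P contains exactly Z = λ₁ stars
    (∀ y ∈ X, (𝒜.filter (fun A => y ∈ A)).card =
        lam * Nat.choose (v - 1) (t - 1) / Nat.choose (k - 1) (t - 1)) ∧
    -- B is a (K', F', Z', S) PDA
    ((Rset t a).card = ∑ s ∈ Finset.Icc 1 (t - 1), a s * Nat.choose t s ∧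
      (∀ j ∈ Finset.Icc 1 t,
        ((Rset t a).filter (fun p => Bent p j = none)).card =
          ∑ s ∈ Finset.Icc 1 (t - 1), a s * Nat.choose (t - 1) (s - 1)) ∧
      (IntEntries t a).card =
        ∑ s ∈ Finset.Icc 1 (t - 1), a s * Nat.choose t (s + 1) ∧
      (∀ p ∈ Rset t a, ∀ p' ∈ Rset t a,
        ∀ j ∈ Finset.Icc 1 t, ∀ j' ∈ Finset.Icc 1 t,
        (p, j) ≠ (p', j') → ∀ e : Finset ℕ × ℕ,
          Bent p j = some e → Bent p' j' = some e →
            p ≠ p' ∧ j ≠ j' ∧ Bent p j' = none ∧ Bent p' j = none)) ∧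
    -- hotplug condition: every t-subset τ of columns has matching rows ζ
    (∀ τ : Finset α, τ ⊆ X → τ.card = t →
      ∃ ζ : Finset (Finset α), ζ ⊆ 𝒜 ∧
        ζ.card = ∑ s ∈ Finset.Icc 1 (t - 1), a s * Nat.choose t s ∧
        ∃ (ρ : Finset α → Finset ℕ × ℕ) (σ : α → ℕ),
          Set.BijOn ρ ↑ζ ↑(Rset t a) ∧
          Set.BijOn σ ↑τ ↑(Finset.Icc 1 t) ∧
          ∀ A ∈ ζ, ∀ y ∈ τ, (y ∈ A ↔ σ y ∈ (ρ A).1)) :=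
  stmt11_general t v k lam X 𝒜 hdes a ha
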